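/- arXiv:2212.00927 — 3 statements merged into one kernel-verified Lean document; each statement's English description precedes it below -/
import Mathlib

section
/- One-step contraction inequality for a projected subgradient step under the non-Lipschitz subgradient bound. Let Z ⊆ ℝ^d be nonempty, closed and convex, let μ > 0, α ≥ 0, L₀ ≥ 0, L₁ ≥ 0, let z, z* ∈ Z, and let F : ℝ^d → ℝ. Suppose ζ ∈ ℝ^d is a μ-strong subgradient of F at z over Z and ‖ζ‖² ≤ L₀² + L₁(F(z) − F(z*)). Then the point z⁺ = proj_Z(z − αζ) satisfies ‖z⁺ − z*‖² ≤ (1 − μα)‖z − z*‖² − (2α − L₁α²)(F(z) − F(z*)) + L₀²α². -/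
/-!
The projection onto `Z` moves no point farther from `z*`, so it suffices to bound
`‖z - αζ - z*‖²`. Expanding the square, the cross term `-2α⟪z - z*, ζ⟫` is controlled by the
strong subgradient inequality at `z*`, and the quadratic term `α²‖ζ‖²` by the growth bound on `ζ`.
-/

open RealInnerProductSpace

section

variable {E : Type*} [NormedAddCommGroup E] [InnerProductSpace ℝ E]

theorem sq_norm_sub_le_of_inner_sub_nonpos {w p y : E} (h : ⟪w - p, y - p⟫ ≤ 0) :
    ‖p - y‖ ^ 2 ≤ ‖w - y‖ ^ 2 := by
  have hsplit : ‖w - y‖ ^ 2 = ‖w - p‖ ^ 2 - 2 * ⟪w - p, y - p⟫ + ‖p - y‖ ^ 2 := by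
    rw [← sub_add_sub_cancel w p y, norm_add_sq_real, ← neg_sub y p, inner_neg_right]
    ring
  nlinarith [sq_nonneg ‖w - p‖]

theorem inner_sub_ge_of_strong_subgradient {F : E → ℝ} {ζ z y : E} {μ : ℝ}
    (h : F y ≥ F z + ⟪ζ, y - z⟫ + μ / 2 * ‖y - z‖ ^ 2) :
    F z - F y + μ / 2 * ‖z - y‖ ^ 2 ≤ ⟪z - y, ζ⟫ := by
  rw [← neg_sub z y, inner_neg_right, real_inner_comm, norm_neg] at h
  linarith

theorem sq_norm_subgradient_step_sub_le {F : E → ℝ} {ζ z y : E} {μ α : ℝ} (hα : 0 ≤ α)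
    (h : F y ≥ F z + ⟪ζ, y - z⟫ + μ / 2 * ‖y - z‖ ^ 2) :
    ‖z - α • ζ - y‖ ^ 2 ≤ (1 - μ * α) * ‖z - y‖ ^ 2 - 2 * α * (F z - F y) + α ^ 2 * ‖ζ‖ ^ 2 := by
  have hexpand : ‖z - α • ζ - y‖ ^ 2 = ‖z - y‖ ^ 2 - 2 * α * ⟪z - y, ζ⟫ + α ^ 2 * ‖ζ‖ ^ 2 := by
    rw [sub_right_comm, norm_sub_sq_real, real_inner_smul_right, norm_smul, mul_pow,
      Real.norm_eq_abs, sq_abs]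
    ring
  have hinner := mul_le_mul_of_nonneg_left (inner_sub_ge_of_strong_subgradient h)
    (by positivity : 0 ≤ 2 * α)
  rw [hexpand]
  linarith

end

theorem one_step_contraction_general {d : ℕ}
    (Z : Set (EuclideanSpace ℝ (Fin d)))
    (μ α L0 L1 : ℝ) (hα : 0 ≤ α)
    (z zs : EuclideanSpace ℝ (Fin d)) (hzs : zs ∈ Z)
    (F : EuclideanSpace ℝ (Fin d) → ℝ)
    (ζ : EuclideanSpace ℝ (Fin d))
    (hζsub : ∀ y ∈ Z, F y ≥ F z + ⟪ζ, y - z⟫ + μ / 2 * ‖y - z‖ ^ 2)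
    (hζbd : ‖ζ‖ ^ 2 ≤ L0 ^ 2 + L1 * (F z - F zs))
    (zp : EuclideanSpace ℝ (Fin d))
    (hproj : ∀ y ∈ Z, ⟪(z - α • ζ) - zp, y - zp⟫ ≤ 0) :
    ‖zp - zs‖ ^ 2 ≤ (1 - μ * α) * ‖z - zs‖ ^ 2
      - (2 * α - L1 * α ^ 2) * (F z - F zs) + L0 ^ 2 * α ^ 2 := by
  have hproj_le := sq_norm_sub_le_of_inner_sub_nonpos (hproj zs hzs)
  have hstep := sq_norm_subgradient_step_sub_le hα (hζsub zs hzs)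
  have hbd := mul_le_mul_of_nonneg_left hζbd (sq_nonneg α)
  linarith

/-- One-step contraction inequality for a projected subgradient step
under the non-Lipschitz subgradient bound. -/
theorem one_step_contraction {d : ℕ}
    (Z : Set (EuclideanSpace ℝ (Fin d)))
    (hZne : Z.Nonempty) (hZcl : IsClosed Z) (hZconv : Convex ℝ Z)
    (μ α L0 L1 : ℝ) (hμ : 0 < μ) (hα : 0 ≤ α) (hL0 : 0 ≤ L0) (hL1 : 0 ≤ L1)
    (z zs : EuclideanSpace ℝ (Fin d)) (hz : z ∈ Z) (hzs : zs ∈ Z)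
    (F : EuclideanSpace ℝ (Fin d) → ℝ)
    (ζ : EuclideanSpace ℝ (Fin d))
    (hζsub : ∀ y ∈ Z, F y ≥ F z + ⟪ζ, y - z⟫ + μ / 2 * ‖y - z‖ ^ 2)
    (hζbd : ‖ζ‖ ^ 2 ≤ L0 ^ 2 + L1 * (F z - F zs))
    (zp : EuclideanSpace ℝ (Fin d)) (hzp : zp ∈ Z)
    (hproj : ∀ y ∈ Z, ⟪(z - α • ζ) - zp, y - zp⟫ ≤ 0) :
    ‖zp - zs‖ ^ 2 ≤ (1 - μ * α) * ‖z - zs‖ ^ 2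
      - (2 * α - L1 * α ^ 2) * (F z - F zs) + L0 ^ 2 * α ^ 2 :=
  one_step_contraction_general Z μ α L0 L1 hα z zs hzs F ζ hζsub hζbd zp hproj
end

section
/- Corollary 1: complexity of the switching subgradient method on the proximal subproblem. Let X ⊆ ℝ^d be nonempty, closed and convex, let M ≥ 0, g_lb ≤ 0, ρ ≥ 0, ρ̂ > ρ, μ = ρ̂ − ρ, and τ > 0. Let f, g : ℝ^d → ℝ be M-Lipschitz and ρ-weakly convex on X, with g(x) ≥ g_lb for all x ∈ X. Let x_k ∈ X satisfy g(x_k) ≤ 0, define F_k(x) = f(x) + (ρ̂/2)‖x − x_k‖² and G_k(x) = g(x) + (ρ̂/2)‖x − x_k‖², and let z* ∈ X satisfy G_k(z*) ≤ 0 and F_k(z*) ≤ F_k(x_k). Define α_t = 2/(μ(t+2) + 36ρ̂²/(μ(t+1))). Suppose sequences z : ℕ → X and ζ : ℕ → ℝ^d satisfy z₀ = x_k and, for every t: if G_k(z_t) ≤ τ then ζ_t is a μ-strong subgradient of F_k at z_t over X of the form ζ_t = ξ_t + ρ̂(z_t − x_k) with ‖ξ_t‖ ≤ M, while if G_k(z_t)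 > τ then ζ_t is a μ-strong subgradient of G_k at z_t over X of the form ζ_t = ξ_t + ρ̂(z_t − x_k) with ‖ξ_t‖ ≤ M; and z_{t+1} = proj_X(z_t − α_t ζ_t). Then for every natural number T ≥ 1 with T ≥ 24(3M² − 2ρ̂·g_lb)/(μτ) and T ≥ sqrt(72ρ̂²D²/(μτ)) where D = sqrt(−8g_lb/μ), the set I = {t : t < T, G_k(z_t) ≤ τ} contains 0 and the weighted average z̄_T = (Σ_{t∈I}(t+1)z_t)/(Σ_{t∈I}(t+1)) satisfies F_k(z̄_T) − F_k(z*) ≤ τ and G_k(z̄_T) ≤ τ. -/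
/-!
A projected step along a `μ`-strong subgradient of `F_k` (when `G_k(z_t) ≤ τ`) or of `G_k`
(otherwise) gives
`‖z_{t+1} - z*‖² ≤ (1 - μ α_t) ‖z_t - z*‖² - 2 α_t gap_t + α_t² K + (2/3) τ α_t`
with `K = 2 M² - 4 ρ̂ g_lb`, where `gap_t = F_k(z_t) - F_k(z*)` in the first case and
`gap_t = τ` in the second (there `G_k(z_t) - G_k(z*) > τ` because `G_k(z*) ≤ 0`); the size of
`ζ_t` is controlled by `G_k(z_t)` since `ρ̂ ‖z_t - x_k‖² = 2 (G_k(z_t) - g(z_t))`. Multiplied by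
suitable weights these inequalities telescope, and the lower bounds on `T` make
`∑_{t<T} (t+1) gap_t ≤ τ ∑_{t<T} (t+1)`. Separating the steps in `I` from the others bounds the
weighted average of `F_k(z_t) - F_k(z*)` over `I` by `τ`, and Jensen's inequality for the convex
functions `F_k` and `G_k` passes both bounds to `z̄_T`.
-/

open RealInnerProductSpace Finset

section InnerProductSpace

variable {E : Type*} [NormedAddCommGroup E] [InnerProductSpace ℝ E]

def IsStrongSubgradientOn (X : Set E) (h : E → ℝ) (μ : ℝ) (x ζ : E) : Prop :=
  ∀ y ∈ X, h y ≥ h x + ⟪ζ, y - x⟫ + μ / 2 * ‖y - x‖ ^ 2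

theorem ConvexOn.add_mul_norm_sub_sq {s : Set E} {h : E → ℝ} {ρ ρ' : ℝ}
    (hf : ConvexOn ℝ s fun x => h x + ρ / 2 * ‖x‖ ^ 2) (hρ : ρ ≤ ρ') (v : E) :
    ConvexOn ℝ s fun x => h x + ρ' / 2 * ‖x - v‖ ^ 2 := by
  have hsq : ConvexOn ℝ s fun x => (ρ' - ρ) / 2 * ‖x‖ ^ 2 :=
    ((convexOn_norm hf.1).pow (fun _ _ => norm_nonneg _) 2).smul (by linarith)
  have hlin : ConvexOn ℝ s fun x => ⟪-ρ' • v, x⟫ := (innerₛₗ ℝ (-ρ' • v)).convexOn hf.1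
  refine ((hf.add hsq).add hlin).add_const (ρ' / 2 * ‖v‖ ^ 2) |>.congr fun x _ => ?_
  simp only [Pi.add_apply, norm_sub_sq_real, real_inner_smul_left, real_inner_comm v x]
  ring

theorem norm_sub_sq_le_of_inner_proj_step_nonpos {x ζ p y : E} {a : ℝ}
    (hp : ⟪x - a • ζ - p, y - p⟫ ≤ 0) :
    ‖p - y‖ ^ 2 ≤ ‖x - y‖ ^ 2 - 2 * a * ⟪ζ, x - y⟫ + a ^ 2 * ‖ζ‖ ^ 2 := by
  have hsplit : ‖x - a • ζ - y‖ ^ 2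
      = ‖x - a • ζ - p‖ ^ 2 - 2 * ⟪x - a • ζ - p, y - p⟫ + ‖p - y‖ ^ 2 := by
    rw [← sub_add_sub_cancel (x - a • ζ) p y, norm_add_sq_real, ← neg_sub y p, inner_neg_right]
    ring
  have hexpand : ‖x - a • ζ - y‖ ^ 2 = ‖x - y‖ ^ 2 - 2 * a * ⟪ζ, x - y⟫ + a ^ 2 * ‖ζ‖ ^ 2 := by
    rw [sub_right_comm, norm_sub_sq_real, real_inner_smul_right, norm_smul, mul_pow,
      Real.norm_eq_abs, sq_abs, real_inner_comm]
    ring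
  nlinarith [sq_nonneg ‖x - a • ζ - p‖]

theorem IsStrongSubgradientOn.sq_dist_proj_step_le {X : Set E} {φ : E → ℝ} {μ a : ℝ}
    {x ζ p y : E} (hζ : IsStrongSubgradientOn X φ μ x ζ) (hy : y ∈ X) (ha : 0 ≤ a)
    (hp : ⟪x - a • ζ - p, y - p⟫ ≤ 0) :
    ‖p - y‖ ^ 2 ≤ (1 - μ * a) * ‖x - y‖ ^ 2 - 2 * a * (φ x - φ y) + a ^ 2 * ‖ζ‖ ^ 2 := by
  have hsub := hζ y hy
  rw [← neg_sub x y, inner_neg_right, norm_neg] at hsub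
  nlinarith [norm_sub_sq_le_of_inner_proj_step_nonpos hp]

theorem norm_add_smul_sq_le {ξ u : E} {M c : ℝ} (hξ : ‖ξ‖ ≤ M) :
    ‖ξ + c • u‖ ^ 2 ≤ 2 * M ^ 2 + 2 * c ^ 2 * ‖u‖ ^ 2 := by
  have hle : ‖ξ + c • u‖ ≤ M + |c| * ‖u‖ :=
    (norm_add_le _ _).trans (by rw [norm_smul, Real.norm_eq_abs]; linarith)
  calc ‖ξ + c • u‖ ^ 2 ≤ (M + |c| * ‖u‖) ^ 2 := pow_le_pow_left₀ (norm_nonneg _) hle 2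
    _ ≤ 2 * (M ^ 2 + (|c| * ‖u‖) ^ 2) := add_sq_le
    _ = 2 * M ^ 2 + 2 * c ^ 2 * ‖u‖ ^ 2 := by rw [mul_pow, sq_abs]; ring

theorem ConvexOn.map_centerMass_le_of_sum_le {ι : Type*} {s : Set E} {f : E → ℝ}
    {t : Finset ι} {w : ι → ℝ} {z : ι → E} {c : ℝ} (hf : ConvexOn ℝ s f)
    (hw : ∀ i ∈ t, 0 ≤ w i) (hW : 0 < ∑ i ∈ t, w i) (hz : ∀ i ∈ t, z i ∈ s)
    (h : ∑ i ∈ t, w i * f (z i) ≤ c * ∑ i ∈ t, w i) : f (t.centerMass w z) ≤ c := by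
  refine (hf.map_centerMass_le hw hW hz).trans ?_
  rw [Finset.centerMass, smul_eq_mul, inv_mul_le_iff₀ hW, mul_comm]
  simpa only [smul_eq_mul, Function.comp_apply] using h

theorem switching_step_sq_dist_le {X : Set E} {Fk Gk g : E → ℝ} {xk zs z z' ζ : E}
    {M glb ρ' μ τ α : ℝ} (hρ' : 0 ≤ ρ') (hτ : 0 ≤ τ) (hα : 0 ≤ α) (hαρ' : 6 * ρ' * α ≤ 1)
    (hGk : Gk z = g z + ρ' / 2 * ‖z - xk‖ ^ 2) (hgz : glb ≤ g z) (hzs : zs ∈ X)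
    (hGzs : Gk zs ≤ 0)
    (hF : Gk z ≤ τ →
      IsStrongSubgradientOn X Fk μ z ζ ∧ ∃ ξ, ζ = ξ + ρ' • (z - xk) ∧ ‖ξ‖ ≤ M)
    (hG : τ < Gk z →
      IsStrongSubgradientOn X Gk μ z ζ ∧ ∃ ξ, ζ = ξ + ρ' • (z - xk) ∧ ‖ξ‖ ≤ M)
    (hproj : ⟪z - α • ζ - z', zs - z'⟫ ≤ 0) :
    ‖z' - zs‖ ^ 2 ≤ (1 - μ * α) * ‖z - zs‖ ^ 2
      - 2 * α * (if Gk z ≤ τ then Fk z - Fk zs else τ)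
      + α ^ 2 * (2 * M ^ 2 - 4 * ρ' * glb) + 2 / 3 * τ * α := by
  have hζ : ∀ ξ, ζ = ξ + ρ' • (z - xk) → ‖ξ‖ ≤ M →
      α ^ 2 * ‖ζ‖ ^ 2 ≤ α ^ 2 * (2 * M ^ 2 - 4 * ρ' * glb) + 4 * ρ' * α ^ 2 * Gk z := by
    rintro ξ rfl hξ
    have hsq := norm_add_smul_sq_le (c := ρ') (u := z - xk) hξ
    have hρ'q : ρ' ^ 2 * ‖z - xk‖ ^ 2 ≤ 2 * ρ' * (Gk z - glb) := by nlinarith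
    nlinarith [sq_nonneg α]
  have hτα : 4 * ρ' * α ^ 2 * τ ≤ 2 / 3 * τ * α := by nlinarith [mul_nonneg hτ hα]
  split_ifs with hz
  · obtain ⟨hsub, ξ, hζξ, hξ⟩ := hF hz
    have hd := hsub.sq_dist_proj_step_le hzs hα hproj
    nlinarith [hζ ξ hζξ hξ, mul_le_mul_of_nonneg_left hz (by positivity : 0 ≤ 4 * ρ' * α ^ 2)]
  · obtain ⟨hsub, ξ, hζξ, hξ⟩ := hG (lt_of_not_ge hz)
    have hd := hsub.sq_dist_proj_step_le hzs hα hproj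
    have hgap : 0 ≤ 2 * α * (1 - 2 * ρ' * α) * (Gk z - τ) :=
      mul_nonneg (mul_nonneg (by positivity) (by linarith)) (by linarith [lt_of_not_ge hz])
    nlinarith [hζ ξ hζξ hξ, mul_nonneg hα (neg_nonneg.2 hGzs)]

end InnerProductSpace

theorem sum_filter_mul_le_of_sum_mul_ite_le {ι : Type*} (s : Finset ι) (p : ι → Prop)
    [DecidablePred p] (w a : ι → ℝ) (τ : ℝ)
    (h : ∑ i ∈ s, w i * (if p i then a i else τ) ≤ τ * ∑ i ∈ s, w i) :
    ∑ i ∈ s.filter p, w i * a i ≤ τ * ∑ i ∈ s.filter p, w i := by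
  simp only [mul_ite, Finset.sum_ite] at h
  rw [← Finset.sum_filter_add_sum_filter_not s p w, mul_add, ← Finset.sum_mul] at h
  linarith

theorem sum_range_add_le_of_succ_add_le {u a b : ℕ → ℝ} (h : ∀ t, u (t + 1) + a t ≤ u t + b t)
    (n : ℕ) : ∑ t ∈ range n, a t + u n ≤ u 0 + ∑ t ∈ range n, b t := by
  induction n with
  | zero => simp
  | succ n ih => simp only [sum_range_succ]; linarith [h n]

theorem sum_range_cast_add_one (n : ℕ) : ∑ t ∈ range n, ((t : ℝ) + 1) = n * (n + 1) / 2 := by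
  induction n with
  | zero => simp
  | succ n ih => rw [sum_range_succ, ih]; push_cast; ring

-- The step size is `(t + 1) / (2 * switchingWeight μ ρ' (t + 1))`, so that
-- `switchingWeight μ ρ' (t + 1) * (1 - μ α t) = switchingWeight μ ρ' t`: the weighted one-step
-- inequalities telescope.
noncomputable def switchingStepSize (μ ρ' : ℝ) (t : ℕ) : ℝ :=
  2 / (μ * ((t : ℝ) + 2) + 36 * ρ' ^ 2 / (μ * ((t : ℝ) + 1)))

noncomputable def switchingWeight (μ ρ' : ℝ) (t : ℕ) : ℝ :=
  μ * t * (t + 1) / 4 + 9 * ρ' ^ 2 / μ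

section StepSize

variable {μ : ℝ} (ρ' : ℝ) (t : ℕ)

theorem switchingWeight_pos (hμ : 0 < μ) : 0 < switchingWeight μ ρ' (t + 1) := by
  unfold switchingWeight; positivity

theorem switchingWeight_nonneg (hμ : 0 < μ) (n : ℕ) : 0 ≤ switchingWeight μ ρ' n := by
  unfold switchingWeight; positivity

theorem switchingStepSize_eq (hμ : 0 < μ) :
    switchingStepSize μ ρ' t = (t + 1) / (2 * switchingWeight μ ρ' (t + 1)) := by
  unfold switchingStepSize switchingWeight
  have : (μ * ((t : ℝ) + 1)) ≠ 0 := by positivity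
  field_simp
  push_cast
  ring

theorem switchingStepSize_pos (hμ : 0 < μ) : 0 < switchingStepSize μ ρ' t := by
  rw [switchingStepSize_eq ρ' t hμ]
  have := switchingWeight_pos ρ' t hμ
  positivity

theorem six_mul_mul_switchingStepSize_le_one (hμ : 0 < μ) :
    6 * ρ' * switchingStepSize μ ρ' t ≤ 1 := by
  have hc := switchingWeight_pos ρ' t hμ
  rw [switchingStepSize_eq ρ' t hμ, mul_div_assoc', div_le_one (by positivity)]
  unfold switchingWeight
  have hsq : 6 * ρ' * ((t : ℝ) + 1) ≤ μ * ((t : ℝ) + 1) ^ 2 / 2 + 18 * ρ' ^ 2 / μ := by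
    rw [div_add_div _ _ two_ne_zero hμ.ne', le_div_iff₀ (by positivity)]
    nlinarith [sq_nonneg (μ * ((t : ℝ) + 1) - 6 * ρ')]
  have hsplit : 2 * (μ * ((t + 1 : ℕ) : ℝ) * ((t + 1 : ℕ) + 1) / 4 + 9 * ρ' ^ 2 / μ)
      = μ * ((t : ℝ) + 1) ^ 2 / 2 + 18 * ρ' ^ 2 / μ + μ * ((t : ℝ) + 1) / 2 := by
    push_cast; ring
  have : 0 < μ * ((t : ℝ) + 1) := by positivity
  linarith

theorem succ_mul_switchingStepSize_le (hμ : 0 < μ) :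
    ((t : ℝ) + 1) * switchingStepSize μ ρ' t ≤ 2 / μ := by
  have hc := switchingWeight_pos ρ' t hμ
  rw [switchingStepSize_eq ρ' t hμ, mul_div_assoc', div_le_div_iff₀ (by positivity) hμ]
  unfold switchingWeight
  push_cast
  have : 0 ≤ 9 * ρ' ^ 2 / μ := by positivity
  nlinarith [mul_pos hμ (by positivity : (0 : ℝ) < t + 1)]

theorem switchingWeight_succ_mul_le {τ K gap R R' : ℝ} (hμ : 0 < μ)
    (h : R' ≤ (1 - μ * switchingStepSize μ ρ' t) * R - 2 * switchingStepSize μ ρ' t * gap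
      + switchingStepSize μ ρ' t ^ 2 * K + 2 / 3 * τ * switchingStepSize μ ρ' t) :
    switchingWeight μ ρ' (t + 1) * R' + (t + 1) * gap
      ≤ switchingWeight μ ρ' t * R
        + ((t + 1) * switchingStepSize μ ρ' t * (K / 2) + (t + 1) * τ / 3) := by
  have hc := switchingWeight_pos ρ' t hμ
  have hα : 2 * switchingStepSize μ ρ' t * switchingWeight μ ρ' (t + 1) = t + 1 := by
    rw [switchingStepSize_eq ρ' t hμ]; field_simp
  have hsucc : switchingWeight μ ρ' (t + 1) - μ * (t + 1) / 2 = switchingWeight μ ρ' t := by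
    unfold switchingWeight; push_cast; ring
  rw [← hsucc]
  linear_combination switchingWeight μ ρ' (t + 1) * h
    + (-(μ / 2 * R) - gap + switchingStepSize μ ρ' t * K / 2 + τ / 3) * hα

end StepSize

theorem sum_succ_mul_gap_le {μ ρ' τ M glb D : ℝ} {T : ℕ} (R gap : ℕ → ℝ) (hμ : 0 < μ)
    (hτ : 0 < τ) (hρ' : 0 ≤ ρ') (hglb : glb ≤ 0) (hR : ∀ t, 0 ≤ R t) (hR0 : 4 * R 0 ≤ D ^ 2)
    (hstep : ∀ t, R (t + 1) ≤ (1 - μ * switchingStepSize μ ρ' t) * R t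
      - 2 * switchingStepSize μ ρ' t * gap t
      + switchingStepSize μ ρ' t ^ 2 * (2 * M ^ 2 - 4 * ρ' * glb)
      + 2 / 3 * τ * switchingStepSize μ ρ' t)
    (hT2 : 24 * (3 * M ^ 2 - 2 * ρ' * glb) / (μ * τ) ≤ (T : ℝ))
    (hT3 : Real.sqrt (72 * ρ' ^ 2 * D ^ 2 / (μ * τ)) ≤ (T : ℝ)) :
    ∑ t ∈ range T, ((t : ℝ) + 1) * gap t ≤ τ * ∑ t ∈ range T, ((t : ℝ) + 1) := by
  set K := 2 * M ^ 2 - 4 * ρ' * glb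
  have hK : 0 ≤ K := by nlinarith [sq_nonneg M]
  have htel := sum_range_add_le_of_succ_add_le (u := fun t => switchingWeight μ ρ' t * R t)
    (fun t => switchingWeight_succ_mul_le ρ' t hμ (hstep t)) T
  have hlast : 0 ≤ switchingWeight μ ρ' T * R T :=
    mul_nonneg (switchingWeight_nonneg ρ' hμ T) (hR T)
  have hinit : switchingWeight μ ρ' 0 * R 0 ≤ τ * T ^ 2 / 32 := by
    have hD := (Real.sqrt_le_left (Nat.cast_nonneg T)).1 hT3
    rw [div_le_iff₀ (by positivity)] at hD
    have hρ'R : 288 * ρ' ^ 2 * R 0 ≤ 72 * ρ' ^ 2 * D ^ 2 := by nlinarith [sq_nonneg ρ']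
    simp only [switchingWeight, CharP.cast_eq_zero, mul_zero, zero_mul, zero_div, zero_add]
    rw [div_mul_eq_mul_div, div_le_iff₀ hμ]
    nlinarith
  have hnoise : ∑ t ∈ range T, ((t : ℝ) + 1) * switchingStepSize μ ρ' t * (K / 2)
      ≤ τ * T ^ 2 / 12 := by
    have hT : 12 * K ≤ μ * τ * T := by
      rw [div_le_iff₀ (by positivity)] at hT2
      nlinarith [sq_nonneg M]
    calc ∑ t ∈ range T, ((t : ℝ) + 1) * switchingStepSize μ ρ' t * (K / 2)
        ≤ ∑ _t ∈ range T, 2 / μ * (K / 2) :=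
          sum_le_sum fun t _ => mul_le_mul_of_nonneg_right (succ_mul_switchingStepSize_le ρ' t hμ)
            (by positivity)
      _ = T * K / μ := by rw [sum_const, card_range, nsmul_eq_mul]; ring
      _ ≤ τ * T ^ 2 / 12 := by
          rw [div_le_iff₀ hμ]; nlinarith [Nat.cast_nonneg (α := ℝ) T]
  have hlin : ∑ t ∈ range T, ((t : ℝ) + 1) * τ / 3 = τ * (T * (T + 1) / 2) / 3 := by
    rw [← sum_range_cast_add_one, mul_sum, sum_div]; exact sum_congr rfl fun t _ => by ring
  rw [sum_add_distrib, hlin] at htel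
  rw [sum_range_cast_add_one]
  nlinarith [sq_nonneg (T : ℝ), Nat.cast_nonneg (α := ℝ) T]

theorem switching_subgradient_proximal_subproblem_general {d : ℕ}
    (X : Set (EuclideanSpace ℝ (Fin d)))
    (M glb ρ ρ' μ τ : ℝ) (hglb : glb ≤ 0) (hρ : 0 ≤ ρ)
    (hρρ' : ρ < ρ') (hμ : μ = ρ' - ρ) (hτ : 0 < τ)
    (f g : EuclideanSpace ℝ (Fin d) → ℝ)
    (hfwc : ConvexOn ℝ X (fun x => f x + ρ / 2 * ‖x‖ ^ 2))
    (hgwc : ConvexOn ℝ X (fun x => g x + ρ / 2 * ‖x‖ ^ 2))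
    (hgbd : ∀ x ∈ X, glb ≤ g x)
    (xk : EuclideanSpace ℝ (Fin d)) (hgxk : g xk ≤ 0)
    (Fk Gk : EuclideanSpace ℝ (Fin d) → ℝ)
    (hFk : ∀ x, Fk x = f x + ρ' / 2 * ‖x - xk‖ ^ 2)
    (hGk : ∀ x, Gk x = g x + ρ' / 2 * ‖x - xk‖ ^ 2)
    (zs : EuclideanSpace ℝ (Fin d)) (hzs : zs ∈ X)
    (hGzs : Gk zs ≤ 0)
    (α : ℕ → ℝ)
    (hα : ∀ t : ℕ, α t = 2 / (μ * ((t : ℝ) + 2) + 36 * ρ' ^ 2 / (μ * ((t : ℝ) + 1))))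
    (z ζ : ℕ → EuclideanSpace ℝ (Fin d))
    (hzmem : ∀ t, z t ∈ X) (hz0 : z 0 = xk)
    (hstepF : ∀ t, Gk (z t) ≤ τ →
      (∀ y ∈ X, Fk y ≥ Fk (z t) + ⟪ζ t, y - z t⟫ + μ / 2 * ‖y - z t‖ ^ 2) ∧
      ∃ ξ : EuclideanSpace ℝ (Fin d), ζ t = ξ + ρ' • (z t - xk) ∧ ‖ξ‖ ≤ M)
    (hstepG : ∀ t, τ < Gk (z t) →
      (∀ y ∈ X, Gk y ≥ Gk (z t) + ⟪ζ t, y - z t⟫ + μ / 2 * ‖y - z t‖ ^ 2) ∧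
      ∃ ξ : EuclideanSpace ℝ (Fin d), ζ t = ξ + ρ' • (z t - xk) ∧ ‖ξ‖ ≤ M)
    (hproj : ∀ t, ∀ y ∈ X, ⟪(z t - α t • ζ t) - z (t + 1), y - z (t + 1)⟫ ≤ 0)
    (T : ℕ) (hT1 : 1 ≤ T)
    (hT2 : 24 * (3 * M ^ 2 - 2 * ρ' * glb) / (μ * τ) ≤ (T : ℝ))
    (hT3 : Real.sqrt (72 * ρ' ^ 2 * Real.sqrt (-8 * glb / μ) ^ 2 / (μ * τ)) ≤ (T : ℝ)) :
    let I := (Finset.range T).filter (fun t => Gk (z t) ≤ τ)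
    let zbar := (∑ t ∈ I, ((t : ℝ) + 1))⁻¹ • ∑ t ∈ I, ((t : ℝ) + 1) • z t
    0 ∈ I ∧ Fk zbar - Fk zs ≤ τ ∧ Gk zbar ≤ τ := by
  intro I zbar
  obtain rfl : α = switchingStepSize μ ρ' := funext hα
  have hμ0 : 0 < μ := by linarith
  have hρ'0 : 0 ≤ ρ' := by linarith
  have hFconv : ConvexOn ℝ X Fk :=
    (hfwc.add_mul_norm_sub_sq hρρ'.le xk).congr fun x _ => (hFk x).symm
  have hGconv : ConvexOn ℝ X Gk :=
    (hgwc.add_mul_norm_sub_sq hρρ'.le xk).congr fun x _ => (hGk x).symm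
  have hR0 : 4 * ‖z 0 - zs‖ ^ 2 ≤ Real.sqrt (-8 * glb / μ) ^ 2 := by
    rw [Real.sq_sqrt (div_nonneg (by linarith) hμ0.le), le_div_iff₀ hμ0, hz0, norm_sub_rev]
    nlinarith [hGk zs, hgbd zs hzs, sq_nonneg ‖zs - xk‖]
  have hsum := sum_succ_mul_gap_le (fun t => ‖z t - zs‖ ^ 2)
    (fun t => if Gk (z t) ≤ τ then Fk (z t) - Fk zs else τ) hμ0 hτ hρ'0 hglb
    (fun t => sq_nonneg _) hR0
    (fun t => switching_step_sq_dist_le hρ'0 hτ.le (switchingStepSize_pos ρ' t hμ0).le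
      (six_mul_mul_switchingStepSize_le_one ρ' t hμ0) (hGk _) (hgbd _ (hzmem t)) hzs hGzs
      (hstepF t) (hstepG t) (hproj t zs hzs)) hT2 hT3
  have hI := sum_filter_mul_le_of_sum_mul_ite_le _ _ _ (fun t => Fk (z t) - Fk zs) _ hsum
  have hI0 : 0 ∈ I := mem_filter.2 ⟨mem_range.2 hT1, by rw [hGk, hz0, sub_self, norm_zero]; linarith⟩
  have hW : 0 < ∑ t ∈ I, ((t : ℝ) + 1) := sum_pos' (fun _ _ => by positivity) ⟨0, hI0, by simp⟩
  refine ⟨hI0, ?_, ?_⟩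
  · refine (hFconv.add_const (-Fk zs)).map_centerMass_le_of_sum_le (fun _ _ => by positivity) hW
      (fun t _ => hzmem t) ?_
    simpa only [Pi.add_apply, sub_eq_add_neg] using hI
  · refine hGconv.map_centerMass_le_of_sum_le (fun _ _ => by positivity) hW (fun t _ => hzmem t) ?_
    rw [mul_sum]
    exact sum_le_sum fun t ht => by rw [mul_comm]; gcongr; exact (mem_filter.1 ht).2

/-- Corollary 1: complexity of the switching subgradient method
on the proximal subproblem. -/
theorem switching_subgradient_proximal_subproblem {d : ℕ}
    (X : Set (EuclideanSpace ℝ (Fin d)))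
    (hXne : X.Nonempty) (hXcl : IsClosed X) (hXconv : Convex ℝ X)
    (M glb ρ ρ' μ τ : ℝ) (hM : 0 ≤ M) (hglb : glb ≤ 0) (hρ : 0 ≤ ρ)
    (hρρ' : ρ < ρ') (hμ : μ = ρ' - ρ) (hτ : 0 < τ)
    (f g : EuclideanSpace ℝ (Fin d) → ℝ)
    (hfLip : ∀ x ∈ X, ∀ y ∈ X, |f x - f y| ≤ M * ‖x - y‖)
    (hgLip : ∀ x ∈ X, ∀ y ∈ X, |g x - g y| ≤ M * ‖x - y‖)
    (hfwc : ConvexOn ℝ X (fun x => f x + ρ / 2 * ‖x‖ ^ 2))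
    (hgwc : ConvexOn ℝ X (fun x => g x + ρ / 2 * ‖x‖ ^ 2))
    (hgbd : ∀ x ∈ X, glb ≤ g x)
    (xk : EuclideanSpace ℝ (Fin d)) (hxk : xk ∈ X) (hgxk : g xk ≤ 0)
    (Fk Gk : EuclideanSpace ℝ (Fin d) → ℝ)
    (hFk : ∀ x, Fk x = f x + ρ' / 2 * ‖x - xk‖ ^ 2)
    (hGk : ∀ x, Gk x = g x + ρ' / 2 * ‖x - xk‖ ^ 2)
    (zs : EuclideanSpace ℝ (Fin d)) (hzs : zs ∈ X)
    (hGzs : Gk zs ≤ 0) (hFzs : Fk zs ≤ Fk xk)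
    (α : ℕ → ℝ)
    (hα : ∀ t : ℕ, α t = 2 / (μ * ((t : ℝ) + 2) + 36 * ρ' ^ 2 / (μ * ((t : ℝ) + 1))))
    (z ζ : ℕ → EuclideanSpace ℝ (Fin d))
    (hzmem : ∀ t, z t ∈ X) (hz0 : z 0 = xk)
    (hstepF : ∀ t, Gk (z t) ≤ τ →
      (∀ y ∈ X, Fk y ≥ Fk (z t) + ⟪ζ t, y - z t⟫ + μ / 2 * ‖y - z t‖ ^ 2) ∧
      ∃ ξ : EuclideanSpace ℝ (Fin d), ζ t = ξ + ρ' • (z t - xk) ∧ ‖ξ‖ ≤ M)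
    (hstepG : ∀ t, τ < Gk (z t) →
      (∀ y ∈ X, Gk y ≥ Gk (z t) + ⟪ζ t, y - z t⟫ + μ / 2 * ‖y - z t‖ ^ 2) ∧
      ∃ ξ : EuclideanSpace ℝ (Fin d), ζ t = ξ + ρ' • (z t - xk) ∧ ‖ξ‖ ≤ M)
    (hproj : ∀ t, ∀ y ∈ X, ⟪(z t - α t • ζ t) - z (t + 1), y - z (t + 1)⟫ ≤ 0)
    (T : ℕ) (hT1 : 1 ≤ T)
    (hT2 : 24 * (3 * M ^ 2 - 2 * ρ' * glb) / (μ * τ) ≤ (T : ℝ))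
    (hT3 : Real.sqrt (72 * ρ' ^ 2 * Real.sqrt (-8 * glb / μ) ^ 2 / (μ * τ)) ≤ (T : ℝ)) :
    let I := (Finset.range T).filter (fun t => Gk (z t) ≤ τ)
    let zbar := (∑ t ∈ I, ((t : ℝ) + 1))⁻¹ • ∑ t ∈ I, ((t : ℝ) + 1) • z t
    0 ∈ I ∧ Fk zbar - Fk zs ≤ τ ∧ Gk zbar ≤ τ :=
  switching_subgradient_proximal_subproblem_general X M glb ρ ρ' μ τ hglb hρ hρρ' hμ hτ f g hfwc
    hgwc hgbd xk hgxk Fk Gk hFk hGk zs hzs hGzs α hα z ζ hzmem hz0 hstepF hstepG hproj T hT1 hT2 hT3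
end

section
/- Descent inequality for the inexact proximal step (KKT form). Let X ⊆ ℝ^d be convex, let μ > 0, ρ̂ > 0, τ ≥ 0, let f, g : ℝ^d → ℝ, let x_k ∈ X with g(x_k) ≤ 0, and define F_k(x) = f(x) + (ρ̂/2)‖x − x_k‖² and G_k(x) = g(x) + (ρ̂/2)‖x − x_k‖². Suppose x̂ ∈ X, λ ≥ 0, ζ_F is a μ-strong subgradient of F_k at x̂ over X, ζ_G is a μ-strong subgradient of G_k at x̂ over X, ν ∈ N_X(x̂), ζ_F + λζ_G + ν = 0, and λ·G_k(x̂) = 0. Then every x₊ ∈ X with F_k(x₊) ≤ F_k(x̂) + τ satisfies f(x_k) − f(x₊) ≥ ((1+λ)μ/2)‖x̂ − x_k‖² − τ. -/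
/-!
Adding the strong-subgradient inequality of `F_k` at `x_k` to `λ` times that of `G_k`, the KKT
stationarity condition turns the sum of the linear terms into `⟨-ν, x_k - x̂⟩ ≥ 0`, so the
Lagrangian `F_k + λ G_k` grows by at least `(1 + λ) μ / 2 ‖x_k - x̂‖²` from `x̂` to `x_k`.
At `x_k` the proximal terms vanish and `λ g(x_k) ≤ 0`, at `x̂` complementary slackness kills
`λ G_k(x̂)`, and `F_k(x̂) ≥ F_k(x₊) - τ ≥ f(x₊) - τ` finishes the estimate.
-/

open RealInnerProductSpace

section StrongSubgradient

variable {E : Type*} [NormedAddCommGroup E] [InnerProductSpace ℝ E]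

def HasStrongSubgradientWithin (h : E → ℝ) (μ : ℝ) (X : Set E) (x ζ : E) : Prop :=
  ∀ y ∈ X, h y ≥ h x + ⟪ζ, y - x⟫ + μ / 2 * ‖y - x‖ ^ 2

def IsNormalVector (X : Set E) (x ν : E) : Prop :=
  ∀ y ∈ X, ⟪ν, y - x⟫ ≤ 0

theorem lagrangian_strong_growth_of_kkt {F G : E → ℝ} {μ lam : ℝ} {X : Set E} {x ζF ζG ν : E}
    (hF : HasStrongSubgradientWithin F μ X x ζF) (hG : HasStrongSubgradientWithin G μ X x ζG)
    (hν : IsNormalVector X x ν) (hlam : 0 ≤ lam) (heq : ζF + lam • ζG + ν = 0)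
    {y : E} (hy : y ∈ X) :
    F x + lam * G x + (1 + lam) * μ / 2 * ‖y - x‖ ^ 2 ≤ F y + lam * G y := by
  have hstat : ⟪ζF, y - x⟫ + lam * ⟪ζG, y - x⟫ = -⟪ν, y - x⟫ := by
    rw [← real_inner_smul_left, ← inner_add_left, ← inner_neg_left,
      eq_neg_of_add_eq_zero_left heq]
  have hGy := mul_le_mul_of_nonneg_left (hG y hy) hlam
  linarith [hF y hy, hν y hy]

end StrongSubgradient

theorem descent_inequality_KKT_general {d : ℕ}
    (X : Set (EuclideanSpace ℝ (Fin d)))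
    (μ ρ' τ : ℝ) (hρ' : 0 < ρ')
    (f g : EuclideanSpace ℝ (Fin d) → ℝ)
    (xk : EuclideanSpace ℝ (Fin d)) (hxk : xk ∈ X) (hgxk : g xk ≤ 0)
    (Fk Gk : EuclideanSpace ℝ (Fin d) → ℝ)
    (hFk : ∀ x, Fk x = f x + ρ' / 2 * ‖x - xk‖ ^ 2)
    (hGk : ∀ x, Gk x = g x + ρ' / 2 * ‖x - xk‖ ^ 2)
    (xh : EuclideanSpace ℝ (Fin d))
    (lam : ℝ) (hlam : 0 ≤ lam)
    (ζF ζG ν : EuclideanSpace ℝ (Fin d))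
    (hζF : ∀ y ∈ X, Fk y ≥ Fk xh + ⟪ζF, y - xh⟫ + μ / 2 * ‖y - xh‖ ^ 2)
    (hζG : ∀ y ∈ X, Gk y ≥ Gk xh + ⟪ζG, y - xh⟫ + μ / 2 * ‖y - xh‖ ^ 2)
    (hν : ∀ y ∈ X, ⟪ν, y - xh⟫ ≤ 0)
    (heq : ζF + lam • ζG + ν = 0)
    (hcomp : lam * Gk xh = 0)
    (xp : EuclideanSpace ℝ (Fin d))
    (hFxp : Fk xp ≤ Fk xh + τ) :
    f xk - f xp ≥ (1 + lam) * μ / 2 * ‖xh - xk‖ ^ 2 - τ := by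
  have hgrowth := lagrangian_strong_growth_of_kkt hζF hζG hν hlam heq hxk
  have hFxk : Fk xk = f xk := by simp [hFk]
  have hGxk : Gk xk = g xk := by simp [hGk]
  have hFxp_ge : f xp ≤ Fk xp := by
    rw [hFk]
    exact le_add_of_nonneg_right (by positivity)
  rw [hFxk, hGxk, hcomp, norm_sub_rev] at hgrowth
  linarith [mul_nonpos_of_nonneg_of_nonpos hlam hgxk]

/-- Descent inequality for the inexact proximal step (KKT form). -/
theorem descent_inequality_KKT {d : ℕ}
    (X : Set (EuclideanSpace ℝ (Fin d))) (hX : Convex ℝ X)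
    (μ ρ' τ : ℝ) (hμ : 0 < μ) (hρ' : 0 < ρ') (hτ : 0 ≤ τ)
    (f g : EuclideanSpace ℝ (Fin d) → ℝ)
    (xk : EuclideanSpace ℝ (Fin d)) (hxk : xk ∈ X) (hgxk : g xk ≤ 0)
    (Fk Gk : EuclideanSpace ℝ (Fin d) → ℝ)
    (hFk : ∀ x, Fk x = f x + ρ' / 2 * ‖x - xk‖ ^ 2)
    (hGk : ∀ x, Gk x = g x + ρ' / 2 * ‖x - xk‖ ^ 2)
    (xh : EuclideanSpace ℝ (Fin d)) (hxh : xh ∈ X)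
    (lam : ℝ) (hlam : 0 ≤ lam)
    (ζF ζG ν : EuclideanSpace ℝ (Fin d))
    (hζF : ∀ y ∈ X, Fk y ≥ Fk xh + ⟪ζF, y - xh⟫ + μ / 2 * ‖y - xh‖ ^ 2)
    (hζG : ∀ y ∈ X, Gk y ≥ Gk xh + ⟪ζG, y - xh⟫ + μ / 2 * ‖y - xh‖ ^ 2)
    (hν : ∀ y ∈ X, ⟪ν, y - xh⟫ ≤ 0)
    (heq : ζF + lam • ζG + ν = 0)
    (hcomp : lam * Gk xh = 0)
    (xp : EuclideanSpace ℝ (Fin d)) (hxp : xp ∈ X)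
    (hFxp : Fk xp ≤ Fk xh + τ) :
    f xk - f xp ≥ (1 + lam) * μ / 2 * ‖xh - xk‖ ^ 2 - τ :=
  descent_inequality_KKT_general X μ ρ' τ hρ' f g xk hxk hgxk Fk Gk hFk hGk xh lam hlam ζF ζG ν hζF
    hζG hν heq hcomp xp hFxp
end
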